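/- The rewrite relation on finite sets of ground type-class constraints generated by the four CHR rules arising from the Haskell Eq/Ord class and instance declarations — namely the propagation rule (if ord t is in the set and eq t is not, add eq t) and the simplification rules (remove ord Int; remove eq Int; replace ord (List t) by ord t; replace eq (List t) by eq t) — is confluent: whenever a set S rewrites in zero or more steps to both S₁ and S₂, there exists a set S₃ such that S₁ and S₂ each rewrite in zero or more steps to S₃. -/

import Mathlib

namespace CHR

/-- Ground Haskell types. -/
inductive Ty : Type
  | int : Ty
  | list : Ty → Ty
  | var : ℕ → Ty
  deriving DecidableEq

/-- Type-class constraints. -/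
inductive Con : Type
  | eq : Ty → Con
  | ord : Ty → Con
  deriving DecidableEq

/-- One-step rewrite relation generated by the four CHR rules arising from
the Haskell `Eq`/`Ord` class and instance declarations. -/
inductive Step : Finset Con → Finset Con → Prop
  /-- `class Eq a => Ord a` -/
  | prop (S : Finset Con) (t : Ty) :
      Con.ord t ∈ S → Con.eq t ∉ S → Step S (insert (Con.eq t) S)
  /-- `instance Ord Int` -/
  | ordInt (S : Finset Con) :
      Con.ord Ty.int ∈ S → Step S (S.erase (Con.ord Ty.int))
  /-- `instance Eq Int` -/
  | eqInt (S : Finset Con) :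
      Con.eq Ty.int ∈ S → Step S (S.erase (Con.eq Ty.int))
  /-- `instance Ord a => Ord [a]` -/
  | ordList (S : Finset Con) (t : Ty) :
      Con.ord (Ty.list t) ∈ S →
      Step S (insert (Con.ord t) (S.erase (Con.ord (Ty.list t))))
  /-- `instance Eq a => Eq [a]` -/
  | eqList (S : Finset Con) (t : Ty) :
      Con.eq (Ty.list t) ∈ S →
      Step S (insert (Con.eq t) (S.erase (Con.eq (Ty.list t))))

/-!
Each constraint has a normal form: the instance rules strip list constructors, end in nothing
at `Int`, and on a type variable `Ord a` also brings its superclass `Eq a`. Every rule leaves the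
union of these normal forms unchanged, and every set can be rewritten to it, because a set other
than its normal form either contains a non-variable constraint, whose simplification lowers the
total type size, or misses a superclass constraint, which propagation adds. So any two reducts
of `S` meet at the normal form of `S`.
-/

open Relation

section Abstract

variable {α : Type*} {r : α → α → Prop}

theorem _root_.Relation.ReflTransGen.eq_of_invariant {f : α → α}
    (hf : ∀ a b, r a b → f b = f a) {a b : α} (hab : ReflTransGen r a b) : f b = f a := by
  induction hab with
  | refl => rfl
  | tail _ hbc ih => rw [hf _ _ hbc, ih]

theorem reflTransGen_of_measure_descent (f : α → α) (μ : α → ℕ)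
    (hf : ∀ a b, r a b → f b = f a) (hdesc : ∀ a, a ≠ f a → ∃ b, r a b ∧ μ b < μ a) (a : α) :
    ReflTransGen r a (f a) := by
  induction a using (measure μ).wf.induction with
  | _ a ih =>
    by_cases ha : a = f a
    · exact ha ▸ .refl
    · obtain ⟨b, hab, hlt⟩ := hdesc a ha
      exact .head hab (hf a b hab ▸ ih b hlt)

theorem confluent_of_reach_invariant (f : α → α) (hf : ∀ a b, r a b → f b = f a)
    (hreach : ∀ a, ReflTransGen r a (f a)) {a b c : α} (hab : ReflTransGen r a b)
    (hac : ReflTransGen r a c) : ∃ d, ReflTransGen r b d ∧ ReflTransGen r c d :=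
  ⟨f a, hab.eq_of_invariant hf ▸ hreach b, hac.eq_of_invariant hf ▸ hreach c⟩

end Abstract

/-- The type variable under the list constructors of `t`, if any. -/
def Ty.base : Ty → Option ℕ
  | .int => none
  | .list t => t.base
  | .var n => some n

def Ty.weight : Ty → ℕ
  | .int => 1
  | .list t => t.weight + 1
  | .var _ => 0

def Con.weight : Con → ℕ
  | .eq t => t.weight
  | .ord t => t.weight

def Con.normalForm : Con → Finset Con
  | .eq t => match t.base with
    | none => ∅
    | some n => {.eq (.var n)}
  | .ord t => match t.base with
    | none => ∅
    | some n => {.ord (.var n), .eq (.var n)}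

def normalForm (S : Finset Con) : Finset Con := S.biUnion Con.normalForm

def weight (S : Finset Con) : ℕ := ∑ c ∈ S, c.weight

theorem Con.exists_var_of_weight_eq_zero {c : Con} (h : c.weight = 0) :
    ∃ n, c = .eq (.var n) ∨ c = .ord (.var n) := by
  rcases c with (_ | _ | n) | (_ | _ | n) <;> simp_all [Con.weight, Ty.weight]

theorem Con.mem_normalForm_self {c : Con} (h : c.weight = 0) : c ∈ c.normalForm := by
  obtain ⟨n, rfl | rfl⟩ := Con.exists_var_of_weight_eq_zero h <;>
    simp [Con.normalForm, Ty.base]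

theorem Con.weight_eq_zero_of_mem_normalForm {c d : Con} (hd : d ∈ c.normalForm) :
    d.weight = 0 := by
  rcases c with t | t <;> rcases hbase : t.base with _ | n <;>
    simp only [Con.normalForm, hbase, Finset.notMem_empty, Finset.mem_insert,
      Finset.mem_singleton] at hd <;>
    rcases hd with rfl | rfl <;> rfl

theorem weight_eq_zero_of_mem_normalForm {S : Finset Con} {d : Con}
    (hd : d ∈ normalForm S) : d.weight = 0 := by
  obtain ⟨c, -, hdc⟩ := Finset.mem_biUnion.mp hd
  exact Con.weight_eq_zero_of_mem_normalForm hdc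

theorem normalForm_insert (c : Con) (S : Finset Con) :
    normalForm (insert c S) = c.normalForm ∪ normalForm S :=
  Finset.biUnion_insert

theorem normalForm_eq_union_erase {c : Con} {S : Finset Con} (h : c ∈ S) :
    normalForm S = c.normalForm ∪ normalForm (S.erase c) := by
  rw [← normalForm_insert, Finset.insert_erase h]

theorem normalForm_step {S T : Finset Con} (h : Step S T) : normalForm T = normalForm S := by
  cases h with
  | prop t hord _ =>
    have : (Con.eq t).normalForm ⊆ (Con.ord t).normalForm := by
      rcases hbase : t.base with _ | n <;> simp [Con.normalForm, hbase]
    rw [normalForm_insert, Finset.union_eq_right]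
    exact this.trans (Finset.subset_biUnion_of_mem _ hord)
  | ordInt h | eqInt h => simp [normalForm_eq_union_erase h, Con.normalForm, Ty.base]
  | ordList t h | eqList t h => rw [normalForm_insert, normalForm_eq_union_erase h]; rfl

theorem weight_erase_lt {c : Con} {S : Finset Con} (hc : c ∈ S) (h : 0 < c.weight) :
    weight (S.erase c) < weight S := by
  have := Finset.sum_erase_add S Con.weight hc
  unfold weight; omega

theorem weight_insert_erase_lt {c d : Con} {S : Finset Con} (hc : c ∈ S)
    (h : d.weight < c.weight) : weight (insert d (S.erase c)) < weight S := by
  have hinsert : weight (insert d (S.erase c)) ≤ d.weight + weight (S.erase c) := by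
    by_cases hd : d ∈ S.erase c
    · rw [Finset.insert_eq_of_mem hd]; omega
    · exact (Finset.sum_insert hd).le
  have := Finset.sum_erase_add S Con.weight hc
  unfold weight at *; omega

theorem exists_step_weight_lt {c : Con} {S : Finset Con} (hc : c ∈ S) (h : c.weight ≠ 0) :
    ∃ T, Step S T ∧ S.erase c ⊆ T ∧ weight T < weight S := by
  rcases c with (_ | u | n) | (_ | u | n)
  · exact ⟨_, .eqInt S hc, subset_rfl, weight_erase_lt hc Nat.one_pos⟩
  · exact ⟨_, .eqList S u hc, Finset.subset_insert _ _,
      weight_insert_erase_lt hc (Nat.lt_succ_self _)⟩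
  · exact absurd rfl h
  · exact ⟨_, .ordInt S hc, subset_rfl, weight_erase_lt hc Nat.one_pos⟩
  · exact ⟨_, .ordList S u hc, Finset.subset_insert _ _,
      weight_insert_erase_lt hc (Nat.lt_succ_self _)⟩
  · exact absurd rfl h

theorem exists_step_insert_of_ne_normalForm {S : Finset Con} (hz : ∀ c ∈ S, c.weight = 0)
    (hS : S ≠ normalForm S) : ∃ d ∈ normalForm S \ S, Step S (insert d S) := by
  have hsub : S ⊆ normalForm S := fun c hc =>
    Finset.subset_biUnion_of_mem _ hc (Con.mem_normalForm_self (hz c hc))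
  obtain ⟨d, hdNF, hdS⟩ := Finset.exists_of_ssubset (hsub.ssubset_of_ne hS)
  refine ⟨d, Finset.mem_sdiff.mpr ⟨hdNF, hdS⟩, ?_⟩
  obtain ⟨c, hc, hdc⟩ := Finset.mem_biUnion.mp hdNF
  obtain ⟨n, rfl | rfl⟩ := Con.exists_var_of_weight_eq_zero (hz c hc) <;>
    simp only [Con.normalForm, Ty.base, Finset.mem_insert, Finset.mem_singleton] at hdc
  · exact absurd (hdc ▸ hc) hdS
  · rcases hdc with rfl | rfl
    · exact absurd hc hdS
    · exact .prop S _ hc hdS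

def potential (S : Finset Con) : ℕ := weight S + (normalForm S \ S).card

theorem exists_step_potential_lt {S : Finset Con} (hS : S ≠ normalForm S) :
    ∃ T, Step S T ∧ potential T < potential S := by
  suffices ∃ T, Step S T ∧
      weight T + (normalForm S \ T).card < weight S + (normalForm S \ S).card by
    obtain ⟨T, hST, hlt⟩ := this
    exact ⟨T, hST, by rwa [potential, normalForm_step hST]⟩
  by_cases hz : ∀ c ∈ S, c.weight = 0
  · obtain ⟨d, hd, hST⟩ := exists_step_insert_of_ne_normalForm hz hS
    obtain ⟨hdNF, hdS⟩ := Finset.mem_sdiff.mp hd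
    have hweight : weight (insert d S) = weight S := by
      rw [weight, Finset.sum_insert hdS, weight_eq_zero_of_mem_normalForm hdNF, zero_add]
      rfl
    have hcard : (normalForm S \ insert d S).card < (normalForm S \ S).card := by
      rw [Finset.sdiff_insert]
      exact Finset.card_erase_lt_of_mem hd
    exact ⟨_, hST, by omega⟩
  · push Not at hz
    obtain ⟨c, hc, hc0⟩ := hz
    obtain ⟨T, hST, hT, hlt⟩ := exists_step_weight_lt hc hc0
    have hcard : (normalForm S \ T).card ≤ (normalForm S \ S).card := by
      refine Finset.card_le_card fun x hx => ?_
      rw [Finset.mem_sdiff] at hx ⊢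
      refine ⟨hx.1, fun hxS => hx.2 (hT (Finset.mem_erase.mpr ⟨?_, hxS⟩))⟩
      rintro rfl
      exact hc0 (weight_eq_zero_of_mem_normalForm hx.1)
    exact ⟨T, hST, by omega⟩

/-- The CHR rewrite system from the Eq/Ord declarations is confluent. -/
theorem eqOrd_chr_confluent :
    ∀ S S₁ S₂ : Finset Con, Relation.ReflTransGen Step S S₁ →
      Relation.ReflTransGen Step S S₂ →
      ∃ S₃, Relation.ReflTransGen Step S₁ S₃ ∧ Relation.ReflTransGen Step S₂ S₃ := by
  have hinv : ∀ S T, Step S T → normalForm T = normalForm S := fun _ _ => normalForm_step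
  have hreach : ∀ S, ReflTransGen Step S (normalForm S) :=
    reflTransGen_of_measure_descent normalForm potential hinv
      fun _ hS => exists_step_potential_lt hS
  exact fun _ _ _ => confluent_of_reach_invariant normalForm hinv hreach

end CHR
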